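/- arXiv:1212.6106 — 2 statements merged into one kernel-verified Lean document; each statement's English description precedes it below -/
import Mathlib

section
/- (Main theorem, solution set) Under the hypotheses of the constrained problem (A, B n×n max-plus matrices, at least one irreducible, λ > −∞, Tr(B) ≤ 0), with θ as defined, a regular vector x attains the minimum θ of x⁻ A x subject to B x ≤ x if and only if x = (θ⁻¹ A ⊕ B)* u for some regular vector u, where M* = I ⊕ M ⊕ ⋯ ⊕ M^{n−1}. -/
noncomputable section

/-- The carrier of the max-plus semiring `ℝ_{max,+}`: the reals with `−∞` adjoined,
with tropical addition `⊔ = max` and tropical multiplication `+`. -/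
local notation "R" => WithBot ℝ

/-- Max-plus matrix product: `{AB}_{ij} = max_k (a_{ik} + b_{kj})`. -/
def tmul {n : ℕ} (A B : Fin n → Fin n → R) : Fin n → Fin n → R :=
  fun i j => Finset.univ.sup fun k => A i k + B k j

/-- The max-plus identity matrix: `0` on the diagonal, `−∞` elsewhere. -/
def idMat (n : ℕ) : Fin n → Fin n → R :=
  fun i j => if i = j then 0 else ⊥

/-- Max-plus matrix power. -/
def tpow {n : ℕ} (A : Fin n → Fin n → R) : ℕ → (Fin n → Fin n → R)
  | 0 => idMat n
  | m + 1 => tmul A (tpow A m)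

/-- Tropical trace: `tr A = max_i a_{ii}`. -/
def ttr {n : ℕ} (A : Fin n → Fin n → R) : R :=
  Finset.univ.sup fun i => A i i

/-- Max-plus matrix-vector product. -/
def matVec {n : ℕ} (A : Fin n → Fin n → R) (x : Fin n → R) : Fin n → R :=
  fun i => Finset.univ.sup fun k => A i k + x k

/-- The tropical `m`-th root of a scalar: `t^{1/m} = t/m` in conventional arithmetic. -/
def troot (m : ℕ) (t : R) : R := t.map fun r => r / m

/-- The tropical spectral radius `λ = ⊕_{m=1}^n tr^{1/m}(A^m)`. -/
def specRad {n : ℕ} (A : Fin n → Fin n → R) : R :=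
  (Finset.Icc 1 n).sup fun m => troot m (ttr (tpow A m))

/-- A matrix is irreducible iff its digraph (of non-`−∞` entries) is strongly connected,
equivalently every pair `(i, j)` is connected by a path of some positive length `m`. -/
def Irred {n : ℕ} (A : Fin n → Fin n → R) : Prop :=
  ∀ i j : Fin n, ∃ m : ℕ, 1 ≤ m ∧ tpow A m i j ≠ ⊥

/-- `Tr(A) = tr A ⊕ ⋯ ⊕ tr Aⁿ`. -/
def Tr {n : ℕ} (A : Fin n → Fin n → R) : R :=
  (Finset.Icc 1 n).sup fun m => ttr (tpow A m)

/-- The Kleene star `A* = I ⊕ A ⊕ ⋯ ⊕ A^{n−1}`. -/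
def star {n : ℕ} (A : Fin n → Fin n → R) : Fin n → Fin n → R :=
  fun i j => (Finset.range n).sup fun m => tpow A m i j

/-- The regular vector `x ∈ ℝⁿ` viewed in `(ℝ ∪ {−∞})ⁿ`. -/
def vec {n : ℕ} (x : Fin n → ℝ) : Fin n → R := fun i => (x i : R)

/-- The objective function `x⁻ A x = max_{i,j} (−x_i + a_{ij} + x_j)` for regular `x`. -/
def quadForm {n : ℕ} (A : Fin n → Fin n → R) (x : Fin n → ℝ) : R :=
  Finset.univ.sup fun p : Fin n × Fin n => ((-(x p.1) : ℝ) : R) + A p.1 p.2 + ((x p.2 : ℝ) : R)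

/-- Tropical division `a ⊗ t⁻¹`, i.e. conventional `a − t`, with value `−∞`
whenever `a = −∞` or `t = −∞`. -/
def tdiv (a t : R) : R :=
  WithBot.recBotCoe ⊥ (fun r => t.map fun s => r - s) a

/-- The product `A B^{i₁} ⋯ A B^{i_k}` for a tuple of exponents `t : Fin k → ℕ`. -/
def prodTup {n k : ℕ} (A B : Fin n → Fin n → R) (t : Fin k → ℕ) : Fin n → Fin n → R :=
  (List.ofFn fun j => tmul A (tpow B (t j))).foldr tmul (idMat n)

/-- The value `θ = ⨁_{k=1}^n ⨁_{0 ≤ i₁+⋯+i_k ≤ n−k} tr^{1/k}(A B^{i₁} ⋯ A B^{i_k})`. -/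
def theta {n : ℕ} (A B : Fin n → Fin n → R) : R :=
  (Finset.Icc 1 n).sup fun k =>
    (Finset.range (n - k + 1)).sup fun s =>
      (Finset.Nat.antidiagonalTuple k s).sup fun t => troot k (ttr (prodTup A B t))

/-!
Write `S = θ⁻¹A ⊕ B`. Expanding `S^m` into words in `θ⁻¹A` and `B`, and rotating a word so that
it starts with `A` (which does not change its trace), shows that every cycle of `S` of length at
most `n` has weight `≤ 0`: a word with `k ≥ 1` letters `A` is one of the products in the
definition of `θ`, so its trace is at most `kθ`, while words in `B` alone are controlled by
`Tr B ≤ 0`. A walk of length `n` contains a cycle, which can be cut out, so `S S* ≤ S*`; hence a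
regular `x` satisfies `S x ≤ x` iff `x = S* u` for some regular `u` (and `u = x` works).
Finally `S x ≤ x` means `B x ≤ x` and `x⁻ A x ≤ θ`, while every feasible `x` has `x⁻ A x ≥ θ`:
if `A x ≤ μ x` and `B x ≤ x` then `A B^{i₁} ⋯ A B^{i_k} x ≤ μ^k x`, which bounds each trace in
the definition of `θ` by `μ^k`.
-/

open Finset

section Scalar

lemma add_finset_sup {ι : Type*} (s : Finset ι) (f : ι → R) (a : R) :
    a + s.sup f = s.sup fun i => a + f i :=
  apply_sup_eq_sup_comp_of_linearOrder (a + ·) (fun _ _ h => add_le_add_right h a)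
    (WithBot.add_bot a)

lemma finset_sup_add {ι : Type*} (s : Finset ι) (f : ι → R) (a : R) :
    s.sup f + a = s.sup fun i => f i + a := by
  simpa only [add_comm _ a] using add_finset_sup s f a

lemma coe_neg_add_le_iff {r : ℝ} {a b : R} : ((-r : ℝ) : R) + a ≤ b ↔ a ≤ b + r := by
  rw [← WithBot.add_le_add_iff_right (z := (r : R)) WithBot.coe_ne_bot, add_right_comm,
    ← WithBot.coe_add, neg_add_cancel, WithBot.coe_zero, zero_add]

lemma tdiv_coe (a : R) (c : ℝ) : tdiv a c = a + ((-c : ℝ) : R) := by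
  cases a with
  | bot => rfl
  | coe r => exact congrArg _ (sub_eq_add_neg r c)

lemma troot_le_iff {k : ℕ} (hk : 1 ≤ k) {z e : R} : troot k z ≤ e ↔ z ≤ k • e := by
  obtain ⟨k, rfl⟩ := Nat.exists_eq_add_of_le' hk
  cases z with
  | bot => simp [troot]
  | coe r =>
    cases e with
    | bot => simp [troot, succ_nsmul]
    | coe s =>
      rw [← WithBot.coe_nsmul]
      simp only [troot, WithBot.map_coe, WithBot.coe_le_coe, nsmul_eq_mul]
      rw [div_le_iff₀ (by positivity), mul_comm]

end Scalar

section MatrixAlgebra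

variable {n : ℕ}

lemma idMat_symm (i j : Fin n) : idMat n i j = idMat n j i := by
  simp only [idMat, eq_comm]

lemma sup_add_idMat (f : Fin n → R) (j : Fin n) :
    (univ.sup fun k => f k + idMat n k j) = f j := by
  refine le_antisymm (Finset.sup_le fun k _ => ?_) ?_
  · by_cases h : k = j <;> simp [idMat, h]
  · simpa [idMat] using le_sup (f := fun k => f k + idMat n k j) (mem_univ j)

lemma sup_idMat_add (f : Fin n → R) (i : Fin n) :
    (univ.sup fun k => idMat n i k + f k) = f i := by
  simpa only [add_comm (idMat n _ _), idMat_symm i] using sup_add_idMat f i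

lemma tmul_idMat (A : Fin n → Fin n → R) : tmul A (idMat n) = A :=
  funext fun i => funext (sup_add_idMat (A i))

lemma idMat_tmul (A : Fin n → Fin n → R) : tmul (idMat n) A = A :=
  funext fun i => funext fun j => sup_idMat_add (fun k => A k j) i

lemma matVec_idMat (y : Fin n → R) : matVec (idMat n) y = y :=
  funext (sup_idMat_add y)

lemma tmul_assoc (A B C : Fin n → Fin n → R) :
    tmul (tmul A B) C = tmul A (tmul B C) := by
  funext i j
  simp only [tmul, finset_sup_add, add_finset_sup, add_assoc]
  exact Finset.sup_comm _ _ _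

lemma matVec_tmul (A B : Fin n → Fin n → R) (y : Fin n → R) :
    matVec (tmul A B) y = matVec A (matVec B y) := by
  funext i
  simp only [matVec, tmul, finset_sup_add, add_finset_sup, add_assoc]
  exact Finset.sup_comm _ _ _

lemma ttr_tmul_comm (A B : Fin n → Fin n → R) : ttr (tmul A B) = ttr (tmul B A) := by
  simp only [ttr, tmul, add_comm (A _ _)]
  exact Finset.sup_comm _ _ _

lemma tmul_add_const (A B : Fin n → Fin n → R) (e : R) :
    tmul A (fun i j => B i j + e) = fun i j => tmul A B i j + e := by
  funext i j
  simp only [tmul, finset_sup_add, add_assoc]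

lemma add_const_tmul (A B : Fin n → Fin n → R) (e : R) :
    tmul (fun i j => A i j + e) B = fun i j => tmul A B i j + e := by
  funext i j
  simp only [tmul, finset_sup_add, add_right_comm _ e]

lemma matVec_mono (M : Fin n → Fin n → R) {y z : Fin n → R} (h : y ≤ z) :
    matVec M y ≤ matVec M z :=
  fun _ => sup_mono_fun fun k _ => add_le_add_right (h k) _

lemma matVec_mono_left {M N : Fin n → Fin n → R} (h : M ≤ N) (y : Fin n → R) :
    matVec M y ≤ matVec N y :=
  fun i => sup_mono_fun fun k _ => add_le_add_left (h i k) _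

lemma matVec_const_add (M : Fin n → Fin n → R) (y : Fin n → R) (e : R) :
    matVec M (fun k => e + y k) = fun i => e + matVec M y i := by
  funext i
  simp only [matVec, add_finset_sup, add_left_comm e]

lemma matVec_add_const (M : Fin n → Fin n → R) (y : Fin n → R) (e : R) :
    matVec (fun i j => M i j + e) y = fun i => matVec M y i + e := by
  funext i
  simp only [matVec, finset_sup_add, add_right_comm _ e]

lemma matVec_sup (M N : Fin n → Fin n → R) (y : Fin n → R) :
    matVec (M ⊔ N) y = matVec M y ⊔ matVec N y := by
  funext i
  simp only [matVec, Pi.sup_apply, ← max_add_add_right]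
  exact sup_sup

lemma matVec_finset_sup {ι : Type*} (s : Finset ι) (F : ι → Fin n → Fin n → R)
    (y : Fin n → R) :
    matVec (fun i j => s.sup fun m => F m i j) y = fun i => s.sup fun m => matVec (F m) y i := by
  funext i
  simp only [matVec, finset_sup_add]
  exact Finset.sup_comm _ _ _

end MatrixAlgebra

section Subeigenvectors

variable {n : ℕ}

lemma matVec_tmul_le {X Y : Fin n → Fin n → R} {y : Fin n → R} {a b : R}
    (hX : matVec X y ≤ fun i => a + y i) (hY : matVec Y y ≤ fun i => b + y i) :
    matVec (tmul X Y) y ≤ fun i => (a + b) + y i :=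
  calc matVec (tmul X Y) y = matVec X (matVec Y y) := matVec_tmul X Y y
    _ ≤ matVec X (fun i => b + y i) := matVec_mono X hY
    _ = fun i => b + matVec X y i := matVec_const_add X y b
    _ ≤ fun i => b + (a + y i) := fun i => add_le_add_right (hX i) b
    _ = fun i => (a + b) + y i := by funext i; rw [add_left_comm, add_assoc]

lemma matVec_tpow_le {M : Fin n → Fin n → R} {y : Fin n → R} {e : R}
    (h : matVec M y ≤ fun i => e + y i) (m : ℕ) :
    matVec (tpow M m) y ≤ fun i => m • e + y i := by
  induction m with
  | zero => simp [tpow, matVec_idMat]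
  | succ m ih =>
    rw [succ_nsmul']
    exact matVec_tmul_le h ih

lemma matVec_tpow_le_self {M : Fin n → Fin n → R} {y : Fin n → R} (h : matVec M y ≤ y)
    (m : ℕ) : matVec (tpow M m) y ≤ y := by
  simpa using matVec_tpow_le (e := 0) (by simpa using h) m

lemma prodTup_zero (A B : Fin n → Fin n → R) (t : Fin 0 → ℕ) : prodTup A B t = idMat n :=
  rfl

lemma prodTup_succ (A B : Fin n → Fin n → R) {k : ℕ} (t : Fin (k + 1) → ℕ) :
    prodTup A B t = tmul (tmul A (tpow B (t 0))) (prodTup A B (Fin.tail t)) := by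
  simp only [prodTup, List.ofFn_succ, List.foldr_cons]
  rfl

lemma matVec_prodTup_le {A B : Fin n → Fin n → R} {y : Fin n → R} {e : R}
    (hA : matVec A y ≤ fun i => e + y i) (hB : matVec B y ≤ y) {k : ℕ} (t : Fin k → ℕ) :
    matVec (prodTup A B t) y ≤ fun i => k • e + y i := by
  induction k with
  | zero => simp [prodTup_zero, matVec_idMat]
  | succ k ih =>
    have hAB : matVec (tmul A (tpow B (t 0))) y ≤ fun i => (e + 0) + y i :=
      matVec_tmul_le hA (by simpa using matVec_tpow_le_self hB (t 0))
    rw [prodTup_succ]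
    simpa only [add_zero, succ_nsmul'] using matVec_tmul_le hAB (ih (Fin.tail t))

lemma ttr_le_of_matVec_le {M : Fin n → Fin n → R} {x : Fin n → ℝ} {e : R}
    (h : matVec M (vec x) ≤ fun i => e + vec x i) : ttr M ≤ e :=
  Finset.sup_le fun i _ => (WithBot.add_le_add_iff_right WithBot.coe_ne_bot).1 <|
    (le_sup (f := fun k => M i k + vec x k) (mem_univ i)).trans (h i)

lemma quadForm_le_iff {A : Fin n → Fin n → R} {x : Fin n → ℝ} {e : R} :
    quadForm A x ≤ e ↔ matVec A (vec x) ≤ fun i => e + vec x i := by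
  simp only [quadForm, matVec, vec, Pi.le_def, Finset.sup_le_iff, mem_univ, true_implies,
    Prod.forall, add_assoc, coe_neg_add_le_iff]

end Subeigenvectors

section Theta

variable {n : ℕ}

lemma le_theta (A B : Fin n → Fin n → R) {k : ℕ} (hk : 1 ≤ k) (t : Fin k → ℕ)
    (ht : k + ∑ j, t j ≤ n) : troot k (ttr (prodTup A B t)) ≤ theta A B :=
  (le_sup (f := fun t => troot k (ttr (prodTup A B t)))
      (Finset.Nat.mem_antidiagonalTuple.2 rfl)).trans <|
    (le_sup (f := fun s => (Finset.Nat.antidiagonalTuple k s).sup fun t =>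
        troot k (ttr (prodTup A B t))) (mem_range.2 (by omega))).trans <|
      le_sup (f := fun k => (range (n - k + 1)).sup fun s =>
        (Finset.Nat.antidiagonalTuple k s).sup fun t => troot k (ttr (prodTup A B t)))
        (mem_Icc.2 ⟨hk, by omega⟩)

lemma prodTup_const_zero (A B : Fin n → Fin n → R) (m : ℕ) :
    prodTup A B (fun _ : Fin m => 0) = tpow A m := by
  induction m with
  | zero => rfl
  | succ m ih =>
    rw [prodTup_succ]
    simp only [tpow, tmul_idMat]
    exact congrArg (tmul A) ih

lemma specRad_le_theta (A B : Fin n → Fin n → R) : specRad A ≤ theta A B :=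
  Finset.sup_le fun m hm => by
    simpa [prodTup_const_zero] using le_theta A B (mem_Icc.1 hm).1 (fun _ => 0) (by
      simpa using (mem_Icc.1 hm).2)

lemma theta_le_of_matVec_le {A B : Fin n → Fin n → R} {x : Fin n → ℝ} {e : R}
    (hA : matVec A (vec x) ≤ fun i => e + vec x i) (hB : matVec B (vec x) ≤ vec x) :
    theta A B ≤ e :=
  Finset.sup_le fun _ hk => Finset.sup_le fun _ _ => Finset.sup_le fun t _ =>
    (troot_le_iff (mem_Icc.1 hk).1).2 (ttr_le_of_matVec_le (matVec_prodTup_le hA hB t))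

end Theta

section Words

variable {n : ℕ} (X Y : Fin n → Fin n → R)

def wordProd : List Bool → Fin n → Fin n → R
  | [] => idMat n
  | b :: w => tmul (if b then X else Y) (wordProd w)

lemma wordProd_append (u v : List Bool) :
    wordProd X Y (u ++ v) = tmul (wordProd X Y u) (wordProd X Y v) := by
  induction u with
  | nil => exact (idMat_tmul _).symm
  | cons b u ih => simp only [List.cons_append, wordProd, ih, tmul_assoc]

lemma wordProd_replicate_false (m : ℕ) : wordProd X Y (List.replicate m false) = tpow Y m := by
  induction m with
  | zero => rfl
  | succ m ih => simp only [List.replicate_succ, wordProd, ih, tpow, Bool.false_eq_true, if_false]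

lemma ttr_wordProd_append_comm (u v : List Bool) :
    ttr (wordProd X Y (u ++ v)) = ttr (wordProd X Y (v ++ u)) := by
  rw [wordProd_append, wordProd_append, ttr_tmul_comm]

lemma wordProd_add_const_left (e : R) (w : List Bool) :
    wordProd (fun i j => X i j + e) Y w = fun i j => wordProd X Y w i j + w.count true • e := by
  induction w with
  | nil => funext i j; simp [wordProd]
  | cons b w ih =>
    cases b
    · simp [wordProd, ih, tmul_add_const]
    · simp only [wordProd, if_true, ih, tmul_add_const, add_const_tmul, List.count_cons_self,
        succ_nsmul', add_assoc]

lemma exists_prodTup_eq_wordProd : ∀ (w : List Bool) (i : ℕ), ∃ (k : ℕ) (t : Fin k → ℕ),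
    k = w.count true + 1 ∧ ∑ j, t j = w.count false + i ∧
      wordProd X Y (true :: (List.replicate i false ++ w)) = prodTup X Y t
  | [], i => ⟨1, fun _ => i, by simp, by simp, by
      simp [wordProd, prodTup, wordProd_replicate_false, tmul_idMat]⟩
  | false :: w, i => by
    obtain ⟨k, t, hk, ht, h⟩ := exists_prodTup_eq_wordProd w (i + 1)
    refine ⟨k, t, by simpa using hk, by simp [ht]; omega, ?_⟩
    rwa [List.replicate_succ', List.append_assoc, List.singleton_append] at h
  | true :: w, i => by
    obtain ⟨k, t, hk, ht, h⟩ := exists_prodTup_eq_wordProd w 0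
    refine ⟨k + 1, Fin.cons i t, by simp [hk], by simp [Fin.sum_cons, ht]; omega, ?_⟩
    simp only [List.replicate_zero, List.nil_append] at h
    rw [prodTup_succ, Fin.cons_zero, Fin.tail_cons, ← h, tmul_assoc,
      ← wordProd_replicate_false X, ← wordProd_append]
    rfl

lemma exists_wordProd_ge (m : ℕ) (i j : Fin n) :
    ∃ w : List Bool, w.length = m ∧ tpow (X ⊔ Y) m i j ≤ wordProd X Y w i j := by
  induction m generalizing i with
  | zero => exact ⟨[], rfl, le_rfl⟩
  | succ m ih =>
    obtain ⟨k, -, hk⟩ := exists_mem_eq_sup univ ⟨i, mem_univ i⟩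
      fun k => (X ⊔ Y) i k + tpow (X ⊔ Y) m k j
    obtain ⟨w, hw, hle⟩ := ih k
    have hstep : ∀ b : Bool, (if b then X else Y) i k + wordProd X Y w k j ≤
        wordProd X Y (b :: w) i j := fun b =>
      le_sup (f := fun l => (if b then X else Y) i l + wordProd X Y w l j) (mem_univ k)
    have hlen : ∀ b, (b :: w).length = m + 1 := fun b => by simp [hw]
    rw [tpow, tmul, hk]
    rcases max_choice (X i k) (Y i k) with h | h
    · exact ⟨_, hlen true, (add_le_add h.le hle).trans (hstep true)⟩
    · exact ⟨_, hlen false, (add_le_add h.le hle).trans (hstep false)⟩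

end Words

section CycleBound

variable {n : ℕ} {A B : Fin n → Fin n → R}

lemma ttr_tpow_le_Tr (S : Fin n → Fin n → R) {m : ℕ} (h1 : 1 ≤ m) (h2 : m ≤ n) :
    ttr (tpow S m) ≤ Tr S :=
  le_sup (f := fun m => ttr (tpow S m)) (mem_Icc.2 ⟨h1, h2⟩)

lemma ttr_wordProd_le (hTrB : Tr B ≤ 0) {w : List Bool} (h1 : 1 ≤ w.length)
    (h2 : w.length ≤ n) : ttr (wordProd A B w) ≤ w.count true • theta A B := by
  by_cases hw : true ∈ w
  · obtain ⟨s, r, rfl⟩ := List.append_of_mem hw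
    have hperm : (s ++ true :: r).Perm (true :: (r ++ s)) := List.perm_append_comm
    obtain ⟨k, t, hk, ht, hprod⟩ := exists_prodTup_eq_wordProd A B (r ++ s) 0
    simp only [List.replicate_zero, List.nil_append] at hprod
    have hcount : (s ++ true :: r).count true = k := by
      rw [hperm.count_eq, List.count_cons_self, hk]
    have hlen : k + ∑ j, t j = (s ++ true :: r).length := by
      rw [← List.count_true_add_count_false, hperm.count_eq, hperm.count_eq, ht, hk,
        List.count_cons_self, List.count_cons_of_ne (by decide)]
      rfl
    have hk1 : 1 ≤ k := by omega
    rw [ttr_wordProd_append_comm, List.cons_append, hprod, hcount]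
    exact (troot_le_iff hk1).1 (le_theta A B hk1 t (hlen ▸ h2))
  · have hrep : w = List.replicate w.length false :=
      List.eq_replicate_of_mem fun b hb => by cases b <;> simp_all
    rw [List.count_eq_zero.2 hw, zero_smul, hrep, wordProd_replicate_false]
    exact (ttr_tpow_le_Tr B h1 h2).trans hTrB

lemma Tr_add_const_sup_le {e : R} (hTrB : Tr B ≤ 0) (he : theta A B + e ≤ 0) :
    Tr ((fun i j => A i j + e) ⊔ B) ≤ 0 :=
  Finset.sup_le fun m hm => Finset.sup_le fun i _ => by
    obtain ⟨h1, h2⟩ := mem_Icc.1 hm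
    obtain ⟨w, rfl, hw⟩ := exists_wordProd_ge (fun i j => A i j + e) B m i i
    calc tpow _ w.length i i ≤ wordProd (fun i j => A i j + e) B w i i := hw
      _ ≤ ttr (wordProd A B w) + w.count true • e := by
          rw [wordProd_add_const_left]
          exact add_le_add_left (le_sup (f := fun i => wordProd A B w i i) (mem_univ i)) _
      _ ≤ w.count true • theta A B + w.count true • e :=
          add_le_add_left (ttr_wordProd_le hTrB h1 h2) _
      _ = w.count true • (theta A B + e) := (nsmul_add _ _ _).symm
      _ ≤ 0 := nsmul_nonpos he _

end CycleBound

lemma List.exists_eq_append_cons_append_cons_of_not_nodup {α : Type*} :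
    ∀ {l : List α}, ¬ l.Nodup → ∃ (a : α) (s t u : List α), l = s ++ a :: t ++ a :: u
  | [], h => absurd List.nodup_nil h
  | b :: l, h => by
    by_cases hb : b ∈ l
    · obtain ⟨t, u, rfl⟩ := List.append_of_mem hb
      exact ⟨b, [], t, u, rfl⟩
    · obtain ⟨a, s, t, u, rfl⟩ :=
        exists_eq_append_cons_append_cons_of_not_nodup fun hl => h (List.nodup_cons.2 ⟨hb, hl⟩)
      exact ⟨a, b :: s, t, u, rfl⟩

section Walks

variable {n : ℕ} (S : Fin n → Fin n → R)

/-- The closing `idMat` makes the weight `⊥` unless the walk ends at `j`. -/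
def walkWeight : Fin n → List (Fin n) → Fin n → R
  | i, [], j => idMat n i j
  | i, k :: l, j => S i k + walkWeight k l j

lemma walkWeight_append_cons (s : List (Fin n)) (i a : Fin n) (r : List (Fin n)) (j : Fin n) :
    walkWeight S i (s ++ a :: r) j = walkWeight S i (s ++ [a]) a + walkWeight S a r j := by
  induction s generalizing i with
  | nil => simp [walkWeight, idMat]
  | cons b s ih => simp only [List.cons_append, walkWeight, ih, add_assoc]

lemma walkWeight_le_tpow (l : List (Fin n)) (i j : Fin n) :
    walkWeight S i l j ≤ tpow S l.length i j := by
  induction l generalizing i with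
  | nil => exact le_rfl
  | cons k l ih =>
    exact (add_le_add_right (ih k) _).trans
      (le_sup (f := fun k => S i k + tpow S l.length k j) (mem_univ k))

lemma exists_walkWeight_ge (m : ℕ) (i j : Fin n) :
    ∃ l : List (Fin n), l.length = m ∧ tpow S m i j ≤ walkWeight S i l j := by
  induction m generalizing i with
  | zero => exact ⟨[], rfl, le_rfl⟩
  | succ m ih =>
    obtain ⟨k, -, hk⟩ :=
      exists_mem_eq_sup univ ⟨i, mem_univ i⟩ fun k => S i k + tpow S m k j
    obtain ⟨l, hl, hle⟩ := ih k
    rw [tpow, tmul, hk]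
    exact ⟨k :: l, by simp [hl], add_le_add_right hle _⟩

lemma walkWeight_cycle_le {a j : Fin n} {t : List (Fin n)}
    (hc : ttr (tpow S (t.length + 1)) ≤ 0) (u : List (Fin n)) :
    walkWeight S a (t ++ a :: u) j ≤ walkWeight S a u j := by
  have hcycle : walkWeight S a (t ++ [a]) a ≤ 0 := by
    refine (walkWeight_le_tpow S _ a a).trans ?_
    simpa using (le_sup (f := fun i => tpow S (t.length + 1) i i) (mem_univ a)).trans hc
  rw [walkWeight_append_cons]
  simpa using add_le_add_left hcycle (walkWeight S a u j)

variable {S}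

lemma tpow_le_star (htr : Tr S ≤ 0) :
    tpow S n ≤ _root_.star S := by
  intro i j
  obtain ⟨l, hl, hle⟩ := exists_walkWeight_ge S n i j
  have hdup : ¬ (i :: l).Nodup := fun hnd => by simpa [hl] using hnd.length_le_card
  obtain ⟨a, s, t, u, hsplit⟩ := List.exists_eq_append_cons_append_cons_of_not_nodup hdup
  have hlen : s.length + t.length + u.length + 2 = n + 1 := by
    simpa [hl, ← add_assoc] using (congrArg List.length hsplit).symm
  have hc := (ttr_tpow_le_Tr S (m := t.length + 1) (by omega) (by omega)).trans htr
  suffices ∃ l', l'.length < n ∧ walkWeight S i l j ≤ walkWeight S i l' j by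
    obtain ⟨l', hl', h⟩ := this
    exact hle.trans <| h.trans <| (walkWeight_le_tpow S l' i j).trans
      (le_sup (f := fun m => tpow S m i j) (mem_range.2 hl'))
  cases s with
  | nil =>
    obtain ⟨rfl, rfl⟩ : i = a ∧ l = t ++ a :: u := by simpa using hsplit
    exact ⟨u, by omega, walkWeight_cycle_le S hc u⟩
  | cons b s =>
    obtain ⟨rfl, rfl⟩ : i = b ∧ l = s ++ a :: (t ++ a :: u) := by simpa using hsplit
    refine ⟨s ++ a :: u, by simp at hlen ⊢; omega, ?_⟩
    rw [walkWeight_append_cons S s i a, walkWeight_append_cons S s i a u]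
    exact add_le_add_right (walkWeight_cycle_le S hc u) _

lemma tmul_star_le_star (htr : Tr S ≤ 0) :
    tmul S (_root_.star S) ≤ _root_.star S := by
  intro i j
  simp only [tmul, _root_.star, add_finset_sup]
  rw [Finset.sup_comm]
  refine Finset.sup_le fun m hm => ?_
  change tpow S (m + 1) i j ≤ _
  rcases (show m + 1 ≤ n from mem_range.1 hm).lt_or_eq with h | h
  · exact le_sup (f := fun m => tpow S m i j) (mem_range.2 h)
  · rw [h]
    exact tpow_le_star htr i j

lemma matVec_star_of_le (hn : 0 < n) {y : Fin n → R} (h : matVec S y ≤ y) :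
    matVec (_root_.star S) y = y := by
  change matVec (fun i j => (range n).sup fun m => tpow S m i j) y = y
  rw [matVec_finset_sup]
  funext i
  refine le_antisymm (Finset.sup_le fun m _ => matVec_tpow_le_self h m i) ?_
  calc y i = matVec (tpow S 0) y i := (congrFun (matVec_idMat y) i).symm
    _ ≤ _ := le_sup (f := fun m => matVec (tpow S m) y i) (mem_range.2 hn)

lemma matVec_matVec_star_le (htr : Tr S ≤ 0)
    (y : Fin n → R) :
    matVec S (matVec (_root_.star S) y) ≤ matVec (_root_.star S) y := by
  rw [← matVec_tmul]
  exact matVec_mono_left (tmul_star_le_star htr) y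

end Walks

theorem constrained_solution_set_general {n : ℕ} (hn : 0 < n) (A B : Fin n → Fin n → R)
    (hlam : ⊥ < specRad A) (hTrB : Tr B ≤ (0 : R)) :
    ∀ x : Fin n → ℝ,
      ((∀ i, matVec B (vec x) i ≤ vec x i) ∧ quadForm A x = theta A B) ↔
        ∃ u : Fin n → ℝ, ∀ i,
          vec x i = matVec (star fun i j => tdiv (A i j) (theta A B) ⊔ B i j) (vec u) i := by
  obtain ⟨c, hc⟩ := WithBot.ne_bot_iff_exists.1 (hlam.trans_le (specRad_le_theta A B)).ne'
  set S : Fin n → Fin n → R := fun i j => tdiv (A i j) (theta A B) ⊔ B i j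
  have hS : S = (fun i j => A i j + ((-c : ℝ) : R)) ⊔ B := by
    funext i j
    simp only [S, ← hc, tdiv_coe, Pi.sup_apply]
  have hsub (y : Fin n → R) :
      matVec S y ≤ y ↔ matVec B y ≤ y ∧ matVec A y ≤ fun i => theta A B + y i := by
    rw [hS, matVec_sup, sup_le_iff, matVec_add_const, and_comm]
    refine and_congr_right' (forall_congr' fun i => ?_)
    dsimp only
    rw [add_comm, coe_neg_add_le_iff, ← hc, add_comm]
  have hcyc : Tr S ≤ 0 := by
    rw [hS]
    refine Tr_add_const_sup_le hTrB ?_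
    rw [← hc, ← WithBot.coe_add, add_neg_cancel, WithBot.coe_zero]
  intro x
  constructor
  · rintro ⟨hB, hq⟩
    have hx : matVec S (vec x) ≤ vec x := (hsub _).2 ⟨hB, quadForm_le_iff.1 hq.le⟩
    exact ⟨x, fun i => (congrFun (matVec_star_of_le hn hx) i).symm⟩
  · rintro ⟨u, hu⟩
    obtain ⟨hB, hA⟩ := (hsub (vec x)).1 (funext hu ▸ matVec_matVec_star_le hcyc (vec u))
    exact ⟨hB, (quadForm_le_iff.2 hA).antisymm
      (theta_le_of_matVec_le (quadForm_le_iff.1 le_rfl) hB)⟩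

/-- Main theorem (solution set): a regular vector `x` attains the minimum `θ` of
`x⁻ A x` subject to `B x ≤ x` if and only if `x = (θ⁻¹ A ⊕ B)* u` for some regular `u`. -/
theorem constrained_solution_set {n : ℕ} (hn : 0 < n) (A B : Fin n → Fin n → R)
    (hirr : Irred A ∨ Irred B) (hlam : ⊥ < specRad A) (hTrB : Tr B ≤ (0 : R)) :
    ∀ x : Fin n → ℝ,
      ((∀ i, matVec B (vec x) i ≤ vec x i) ∧ quadForm A x = theta A B) ↔
        ∃ u : Fin n → ℝ, ∀ i,
          vec x i = matVec (star fun i j => tdiv (A i j) (theta A B) ⊔ B i j) (vec u) i :=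
  constrained_solution_set_general hn A B hlam hTrB
end
end

section
/- (Unconstrained corollary) Let A be an irreducible n×n matrix over the max-plus semiring with spectral radius λ > −∞. Then the minimum of x⁻ A x over all regular vectors x equals λ, and it is attained exactly at the vectors x = (λ⁻¹ A)* u for regular u. -/
noncomputable section

/-- The carrier of the max-plus semiring `ℝ_{max,+}`: the reals with `−∞` adjoined,
with tropical addition `⊔ = max` and tropical multiplication `+`. -/
local notation "R" => WithBot ℝ

/-! A regular `x` is a potential for `A` shifted by `c = x⁻Ax`: `a_ij + x_j ≤ c + x_i`, which
telescopes along cycles, so every cycle mean, hence `λ`, is at most `x⁻Ax`. For `B = λ⁻¹A` every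
cycle has weight `≤ 0`, so cutting a cycle out of a walk of length `n` (one exists by pigeonhole)
gives `B ⊗ B* ≤ B*`. Finally `x⁻Ax ≤ λ` says `Bx ≤ x`, and such `x` are exactly the vectors `B*u`:
`Bx ≤ x` gives `B*x = x`, while `B(B*u) ≤ B*u`. -/

namespace MaxPlus

variable {n : ℕ}

lemma finset_sup_add {ι : Type*} (s : Finset ι) (f : ι → R) (c : R) :
    s.sup f + c = s.sup fun i => f i + c :=
  Finset.apply_sup_eq_sup_comp_of_linearOrder (· + c) (fun _ _ h => by dsimp only; gcongr)
    (WithBot.bot_add c)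

lemma add_finset_sup {ι : Type*} (s : Finset ι) (f : ι → R) (c : R) :
    c + s.sup f = s.sup fun i => c + f i := by
  simp only [add_comm c, finset_sup_add]

lemma add_le_tpow_add (B : Fin n → Fin n → R) (b : ℕ) (k j : Fin n) :
    ∀ (a : ℕ) (i : Fin n), tpow B a i k + tpow B b k j ≤ tpow B (a + b) i j
  | 0, i => by
    by_cases h : i = k
    · subst h; simp [tpow, idMat]
    · simp [tpow, idMat, h]
  | a + 1, i => by
    rw [Nat.add_right_comm]
    simp only [tpow, tmul, finset_sup_add, Finset.sup_le_iff, Finset.mem_univ, true_implies]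
    intro l
    calc B i l + tpow B a l k + tpow B b k j
        ≤ B i l + tpow B (a + b) l j := by
          rw [add_assoc]; exact add_le_add_right (add_le_tpow_add B b k j a l) _
      _ ≤ _ := Finset.le_sup (f := fun l => B i l + tpow B (a + b) l j) (Finset.mem_univ l)

lemma matVec_le_iff {B : Fin n → Fin n → R} {x y : Fin n → R} :
    matVec B x ≤ y ↔ ∀ i j, B i j + x j ≤ y i := by
  simp [Pi.le_def, matVec]

lemma matVec_mono_left {A B : Fin n → Fin n → R} (h : A ≤ B) (x : Fin n → R) :
    matVec A x ≤ matVec B x :=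
  matVec_le_iff.2 fun i j => (add_le_add_left (h i j) _).trans
    (Finset.le_sup (f := fun k => B i k + x k) (Finset.mem_univ j))

lemma matVec_mono_right (B : Fin n → Fin n → R) {x y : Fin n → R} (h : x ≤ y) :
    matVec B x ≤ matVec B y :=
  matVec_le_iff.2 fun i j => (add_le_add_right (h j) _).trans
    (Finset.le_sup (f := fun k => B i k + y k) (Finset.mem_univ j))

lemma matVec_idMat (x : Fin n → R) : matVec (idMat n) x = x := by
  refine le_antisymm (matVec_le_iff.2 fun i j => ?_) fun i => ?_
  · by_cases h : i = j
    · subst h; simp [idMat]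
    · simp [idMat, h]
  · simpa [matVec, idMat] using Finset.le_sup (f := fun k => idMat n i k + x k) (Finset.mem_univ i)

lemma matVec_tmul (A B : Fin n → Fin n → R) (x : Fin n → R) :
    matVec (tmul A B) x = matVec A (matVec B x) := by
  funext i
  simp only [matVec, tmul, finset_sup_add, add_finset_sup, add_assoc]
  exact Finset.sup_comm _ _ _

def walkWeight (B : Fin n → Fin n → R) (m : ℕ) (v : ℕ → Fin n) : R :=
  ∑ t ∈ Finset.range m, B (v t) (v (t + 1))

lemma walkWeight_succ (B : Fin n → Fin n → R) (m : ℕ) (v : ℕ → Fin n) :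
    walkWeight B (m + 1) v = B (v 0) (v 1) + walkWeight B m fun t => v (t + 1) := by
  rw [walkWeight, Finset.sum_range_succ', add_comm]; rfl

lemma walkWeight_add (B : Fin n → Fin n → R) (a b : ℕ) (v : ℕ → Fin n) :
    walkWeight B (a + b) v = walkWeight B a v + walkWeight B b fun t => v (a + t) := by
  simp only [walkWeight, Finset.sum_range_add, add_assoc]

lemma walkWeight_le_tpow (B : Fin n → Fin n → R) :
    ∀ (m : ℕ) (v : ℕ → Fin n), walkWeight B m v ≤ tpow B m (v 0) (v m)
  | 0, v => by simp [walkWeight, tpow, idMat]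
  | m + 1, v => by
    rw [walkWeight_succ]
    calc B (v 0) (v 1) + walkWeight B m (fun t => v (t + 1))
        ≤ B (v 0) (v 1) + tpow B m (v 1) (v (m + 1)) :=
          add_le_add_right (walkWeight_le_tpow B m fun t => v (t + 1)) _
      _ ≤ tpow B (m + 1) (v 0) (v (m + 1)) :=
          Finset.le_sup (f := fun k => B (v 0) k + tpow B m k (v (m + 1))) (Finset.mem_univ _)

lemma exists_walkWeight_eq_tpow (B : Fin n → Fin n → R) (j : Fin n) :
    ∀ (m : ℕ) (i : Fin n), tpow B m i j ≠ ⊥ →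
      ∃ v : ℕ → Fin n, v 0 = i ∧ v m = j ∧ walkWeight B m v = tpow B m i j
  | 0, i, h => by
    obtain rfl : i = j := by by_contra hij; simp [tpow, idMat, hij] at h
    exact ⟨fun _ => i, rfl, rfl, by simp [walkWeight, tpow, idMat]⟩
  | m + 1, i, h => by
    obtain ⟨k, -, hk⟩ := Finset.exists_mem_eq_sup Finset.univ ⟨i, Finset.mem_univ i⟩
      fun k => B i k + tpow B m k j
    replace hk : tpow B (m + 1) i j = B i k + tpow B m k j := hk
    obtain ⟨v, rfl, rfl, hv⟩ :=
      exists_walkWeight_eq_tpow B j m k fun h' => h (by rw [hk, h', WithBot.add_bot])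
    refine ⟨fun t => if t = 0 then i else v (t - 1), rfl, rfl, ?_⟩
    simp [walkWeight_succ, hk, ← hv]

def NonposCycles (B : Fin n → Fin n → R) : Prop :=
  ∀ (k : Fin n) (m : ℕ), 1 ≤ m → m ≤ n → tpow B m k k ≤ 0

lemma tpow_le_star {B : Fin n → Fin n → R} (hcyc : NonposCycles B) {m : ℕ} (hm : m ≤ n)
    (i j : Fin n) : tpow B m i j ≤ star B i j := by
  rcases hm.lt_or_eq with hm | rfl
  · exact Finset.le_sup (f := fun m => tpow B m i j) (Finset.mem_range.2 hm)
  by_cases h : tpow B m i j = ⊥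
  · simp [h]
  obtain ⟨v, rfl, rfl, hv⟩ := exists_walkWeight_eq_tpow B j m i h
  obtain ⟨p, q, hpq, hq, hvpq⟩ : ∃ p q, p < q ∧ q ≤ m ∧ v p = v q := by
    obtain ⟨a, b, hab, heq⟩ :=
      Fintype.exists_ne_map_eq_of_card_lt (fun t : Fin (m + 1) => v t) (by simp)
    rcases lt_or_gt_of_ne hab with h | h
    · exact ⟨a, b, h, Nat.lt_succ_iff.1 b.2, heq⟩
    · exact ⟨b, a, h, Nat.lt_succ_iff.1 a.2, heq.symm⟩
  have hcycle : walkWeight B (q - p) (fun t => v (p + t)) ≤ 0 := by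
    have := walkWeight_le_tpow B (q - p) fun t => v (p + t)
    rw [add_zero, Nat.add_sub_cancel' hpq.le, ← hvpq] at this
    exact this.trans (hcyc _ _ (by omega) (by omega))
  have hsplit : m = p + ((q - p) + (m - q)) := by omega
  calc tpow B m (v 0) (v m) = walkWeight B (p + ((q - p) + (m - q))) v :=
        hv.symm.trans (congrArg (fun m => walkWeight B m v) hsplit)
    _ = walkWeight B p v + (walkWeight B (q - p) (fun t => v (p + t)) +
          walkWeight B (m - q) fun t => v (q + t)) := by
        rw [walkWeight_add, walkWeight_add]
        congr 3; funext t; congr 1; omega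
    _ ≤ tpow B p (v 0) (v p) + (0 + tpow B (m - q) (v p) (v m)) := by
        gcongr
        · exact walkWeight_le_tpow B p v
        · have := walkWeight_le_tpow B (m - q) fun t => v (q + t)
          rwa [add_zero, Nat.add_sub_cancel' hq, ← hvpq] at this
    _ ≤ tpow B (p + (m - q)) (v 0) (v m) := by rw [zero_add]; exact add_le_tpow_add B _ _ _ _ _
    _ ≤ star B (v 0) (v m) :=
        Finset.le_sup (f := fun k => tpow B k (v 0) (v m)) (Finset.mem_range.2 (by omega))

lemma tmul_star_le {B : Fin n → Fin n → R} (hcyc : NonposCycles B) :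
    tmul B (star B) ≤ star B := fun i j => by
  simp only [tmul, _root_.star, add_finset_sup, Finset.sup_le_iff, Finset.mem_univ,
    Finset.mem_range, true_implies]
  intro k m hm
  exact (Finset.le_sup (f := fun k => B i k + tpow B m k j) (Finset.mem_univ k)).trans
    (tpow_le_star hcyc hm i j)

lemma idMat_le_star (hn : 0 < n) (B : Fin n → Fin n → R) : idMat n ≤ star B := fun i j =>
  Finset.le_sup (f := fun m => tpow B m i j) (Finset.mem_range.2 hn)

lemma le_matVec_star (hn : 0 < n) (B : Fin n → Fin n → R) (x : Fin n → R) :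
    x ≤ matVec (star B) x :=
  (matVec_idMat x).symm.le.trans (matVec_mono_left (idMat_le_star hn B) x)

lemma matVec_matVec_star_le {B : Fin n → Fin n → R} (hcyc : NonposCycles B) (u : Fin n → R) :
    matVec B (matVec (star B) u) ≤ matVec (star B) u :=
  matVec_tmul B (star B) u ▸ matVec_mono_left (tmul_star_le hcyc) u

lemma matVec_tpow_le {B : Fin n → Fin n → R} {x : Fin n → R} (h : matVec B x ≤ x) :
    ∀ m, matVec (tpow B m) x ≤ x
  | 0 => (matVec_idMat x).le
  | m + 1 => by
    rw [tpow, matVec_tmul]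
    exact (matVec_mono_right B (matVec_tpow_le h m)).trans h

lemma matVec_star_eq_of_matVec_le (hn : 0 < n) {B : Fin n → Fin n → R} {x : Fin n → R}
    (h : matVec B x ≤ x) : matVec (star B) x = x := by
  refine le_antisymm (matVec_le_iff.2 fun i j => ?_) (le_matVec_star hn B x)
  simp only [_root_.star, finset_sup_add, Finset.sup_le_iff]
  exact fun m _ => (Finset.le_sup (f := fun k => tpow B m i k + x k) (Finset.mem_univ j)).trans
    (matVec_tpow_le h m i)

lemma quadForm_le_iff (A : Fin n → Fin n → R) (x : Fin n → ℝ) (c : R) :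
    quadForm A x ≤ c ↔ ∀ i j, A i j + vec x j ≤ c + vec x i := by
  simp only [quadForm, Finset.sup_le_iff, Finset.mem_univ, true_implies, Prod.forall]
  refine forall₂_congr fun i j => ?_
  rw [← WithBot.add_le_add_iff_right (WithBot.coe_ne_bot : ((x i : ℝ) : R) ≠ ⊥),
    add_right_comm, add_right_comm ((-x i : ℝ) : R), ← WithBot.coe_add, neg_add_cancel,
    WithBot.coe_zero, zero_add]
  rfl

lemma tpow_add_le_nsmul_add {A : Fin n → Fin n → R} {x : Fin n → R} {c : R}
    (h : ∀ i j, A i j + x j ≤ c + x i) :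
    ∀ (m : ℕ) (i j : Fin n), tpow A m i j + x j ≤ m • c + x i
  | 0, i, j => by
    by_cases hij : i = j
    · subst hij; simp [tpow, idMat]
    · simp [tpow, idMat, hij]
  | m + 1, i, j => by
    simp only [tpow, tmul, finset_sup_add, Finset.sup_le_iff, Finset.mem_univ, true_implies]
    intro k
    calc A i k + tpow A m k j + x j = A i k + (tpow A m k j + x j) := add_assoc _ _ _
      _ ≤ A i k + (m • c + x k) := add_le_add_right (tpow_add_le_nsmul_add h m k j) _
      _ = m • c + (A i k + x k) := by ac_rfl
      _ ≤ m • c + (c + x i) := add_le_add_right (h i k) _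
      _ = (m + 1) • c + x i := by rw [succ_nsmul, add_assoc]

lemma troot_le_iff {m : ℕ} (hm : 1 ≤ m) {t c : R} : troot m t ≤ c ↔ t ≤ m • c := by
  induction t using WithBot.recBotCoe with
  | bot => simp [troot]
  | coe s =>
    induction c using WithBot.recBotCoe with
    | bot =>
      obtain ⟨k, rfl⟩ := Nat.exists_eq_add_of_le' hm
      simp [troot, succ_nsmul]
    | coe r =>
      rw [troot, WithBot.map_coe, ← WithBot.coe_nsmul, WithBot.coe_le_coe, WithBot.coe_le_coe,
        nsmul_eq_mul, div_le_iff₀ (by exact_mod_cast hm), mul_comm]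

lemma specRad_le_of_le_add {A : Fin n → Fin n → R} {x : Fin n → ℝ} {c : R}
    (h : ∀ i j, A i j + vec x j ≤ c + vec x i) : specRad A ≤ c := by
  refine Finset.sup_le fun m hm => ?_
  rw [troot_le_iff (Finset.mem_Icc.1 hm).1]
  exact Finset.sup_le fun i _ =>
    (WithBot.add_le_add_iff_right WithBot.coe_ne_bot).1 (tpow_add_le_nsmul_add h m i i)

lemma specRad_le_quadForm (A : Fin n → Fin n → R) (x : Fin n → ℝ) : specRad A ≤ quadForm A x :=
  specRad_le_of_le_add ((quadForm_le_iff A x _).1 le_rfl)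

lemma pos_of_bot_lt_specRad {A : Fin n → Fin n → R} (h : ⊥ < specRad A) : 0 < n := by
  refine Nat.pos_of_ne_zero fun hn => ?_
  subst hn
  simp [specRad] at h

lemma exists_vec_eq_matVec_star (hn : 0 < n) (B : Fin n → Fin n → R) (u : Fin n → ℝ) :
    ∃ x : Fin n → ℝ, vec x = matVec (star B) (vec u) :=
  ⟨fun i => (matVec (star B) (vec u) i).unbot
      (ne_bot_of_le_ne_bot WithBot.coe_ne_bot (le_matVec_star hn B (vec u) i)),
    funext fun _ => WithBot.coe_unbot _ _⟩

lemma tdiv_coe_add_cancel (a : R) (l : ℝ) : tdiv a l + l = a := by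
  induction a using WithBot.recBotCoe with
  | bot => rfl
  | coe r =>
    change (((l : R).map fun s => r - s) + l) = r
    rw [WithBot.map_coe, ← WithBot.coe_add, sub_add_cancel]

lemma tpow_add_nsmul {A B : Fin n → Fin n → R} {c : R} (hB : ∀ i j, B i j + c = A i j) :
    ∀ (m : ℕ) (i j : Fin n), tpow B m i j + m • c = tpow A m i j
  | 0, i, j => by simp [tpow]
  | m + 1, i, j => by
    simp only [tpow, tmul, finset_sup_add]
    refine Finset.sup_congr rfl fun k _ => ?_
    rw [← hB, ← tpow_add_nsmul hB m k j, succ_nsmul']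
    ac_rfl

lemma nonposCycles_of_add_eq {A B : Fin n → Fin n → R} {l : ℝ} (hB : ∀ i j, B i j + l = A i j)
    (hl : specRad A = l) : NonposCycles B := by
  intro k m hm hmn
  have hA : tpow A m k k ≤ m • specRad A :=
    (Finset.le_sup (f := fun i => tpow A m i i) (Finset.mem_univ k)).trans <|
      (troot_le_iff hm).1 <| Finset.le_sup (f := fun m => troot m (ttr (tpow A m)))
        (Finset.mem_Icc.2 ⟨hm, hmn⟩)
  rw [← WithBot.add_le_add_iff_right (WithBot.coe_nsmul l m ▸ WithBot.coe_ne_bot),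
    tpow_add_nsmul hB, zero_add, ← hl]
  exact hA

lemma quadForm_le_iff_matVec_le {A B : Fin n → Fin n → R} {l : ℝ}
    (hB : ∀ i j, B i j + l = A i j) (x : Fin n → ℝ) :
    quadForm A x ≤ l ↔ matVec B (vec x) ≤ vec x := by
  rw [quadForm_le_iff, matVec_le_iff]
  refine forall₂_congr fun i j => ?_
  rw [← hB, add_right_comm, add_comm (l : R), WithBot.add_le_add_iff_right WithBot.coe_ne_bot]

end MaxPlus

open MaxPlus

theorem unconstrained_min_eq_specRad_general {n : ℕ} (A : Fin n → Fin n → R)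
    (hlam : ⊥ < specRad A) :
    IsLeast {t : R | ∃ x : Fin n → ℝ, quadForm A x = t} (specRad A) ∧
      ∀ x : Fin n → ℝ,
        (quadForm A x = specRad A ↔
          ∃ u : Fin n → ℝ, ∀ i,
            vec x i = matVec (star fun i j => tdiv (A i j) (specRad A)) (vec u) i) := by
  obtain ⟨l, hl⟩ := WithBot.ne_bot_iff_exists.1 hlam.ne'
  have hn := pos_of_bot_lt_specRad hlam
  set B : Fin n → Fin n → R := fun i j => tdiv (A i j) (specRad A)
  have hB : ∀ i j, B i j + l = A i j := fun i j => hl ▸ tdiv_coe_add_cancel (A i j) l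
  have hcyc : NonposCycles B := nonposCycles_of_add_eq hB hl.symm
  have hopt (x : Fin n → ℝ) : quadForm A x = specRad A ↔ matVec B (vec x) ≤ vec x := by
    rw [← quadForm_le_iff_matVec_le hB, hl, le_antisymm_iff,
      and_iff_left (specRad_le_quadForm A x)]
  have hchar (x : Fin n → ℝ) :
      quadForm A x = specRad A ↔ ∃ u : Fin n → ℝ, vec x = matVec (star B) (vec u) := by
    refine (hopt x).trans ⟨fun h => ⟨x, (matVec_star_eq_of_matVec_le hn h).symm⟩, ?_⟩
    rintro ⟨u, hu⟩
    exact hu ▸ matVec_matVec_star_le hcyc (vec u)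
  obtain ⟨x₀, hx₀⟩ := exists_vec_eq_matVec_star hn B 0
  refine ⟨⟨⟨x₀, (hchar x₀).2 ⟨0, hx₀⟩⟩, ?_⟩, fun x => (hchar x).trans (by simp only [funext_iff])⟩
  rintro _ ⟨x, rfl⟩
  exact specRad_le_quadForm A x

/-- Unconstrained corollary: for irreducible `A` with spectral radius `λ > −∞`, the
minimum of `x⁻ A x` over regular vectors equals `λ`, attained exactly at `x = (λ⁻¹ A)* u`. -/
theorem unconstrained_min_eq_specRad {n : ℕ} (hn : 0 < n) (A : Fin n → Fin n → R)
    (hirr : Irred A) (hlam : ⊥ < specRad A) :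
    IsLeast {t : R | ∃ x : Fin n → ℝ, quadForm A x = t} (specRad A) ∧
      ∀ x : Fin n → ℝ,
        (quadForm A x = specRad A ↔
          ∃ u : Fin n → ℝ, ∀ i,
            vec x i = matVec (star fun i j => tdiv (A i j) (specRad A)) (vec u) i) :=
  unconstrained_min_eq_specRad_general A hlam
end
end
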